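/- Let Ψ_opt ∈ H_M be a minimizer of A_M^u over H_M, i.e. A_M^u(Ψ_opt) ≤ A_M^u(Ψ) for all Ψ ∈ H_M. Then for every 0 ≤ ℓ ≤ N, Ψ_opt also minimizes A_{M,ℓ}^u: A_{M,ℓ}^u(Ψ_opt) = min_{Ψ∈H_M} A_{M,ℓ}^u(Ψ). -/
import Mathlib


open Finset

noncomputable section

namespace SelfDiffusion

/-- The box `{-M,…,M}^d ⊂ ℤ^d`. -/
def box (d M : ℕ) : Finset (Fin d → ℤ) :=
  Fintype.piFinset fun _ => Finset.Icc (-(M : ℤ)) (M : ℤ)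

/-- The set of sites `S_M = {-M,…,M}^d \ {0}`. -/
def SM (d M : ℕ) : Finset (Fin d → ℤ) := (box d M).erase 0

/-- A site, i.e. an element of `S_M`. -/
abbrev Site (d M : ℕ) := {s : Fin d → ℤ // s ∈ SM d M}

/-- A particle configuration `η ∈ {0,1}^{S_M}`. -/
abbrev Cfg (d M : ℕ) := Site d M → Fin 2

/-- The representative of `x` in `{-M,…,M}` modulo `2M+1`. -/
def redInt (M : ℕ) (x : ℤ) : ℤ := (x + M) % (2 * M + 1) - M

/-- The representative of `s ∈ ℤ^d` in the box `{-M,…,M}^d`, coordinatewise mod `2M+1`. -/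
def redVec (d M : ℕ) (s : Fin d → ℤ) : Fin d → ℤ := fun i => redInt M (s i)

lemma redInt_mem (M : ℕ) (x : ℤ) : redInt M x ∈ Finset.Icc (-(M : ℤ)) (M : ℤ) := by
  have h1 : (0 : ℤ) < 2 * M + 1 := by positivity
  have h2 := Int.emod_nonneg (x + M) (by omega : (2 * (M : ℤ) + 1) ≠ 0)
  have h3 := Int.emod_lt_of_pos (x + (M : ℤ)) h1
  rw [Finset.mem_Icc, redInt]
  omega

lemma redVec_mem_box (d M : ℕ) (s : Fin d → ℤ) : redVec d M s ∈ box d M := by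
  rw [box, Fintype.mem_piFinset]
  exact fun i => redInt_mem M (s i)

/-- The periodic extension `η̃` of a configuration `η`, evaluated at `w ∈ ℤ^d`. -/
def extCfg {d M : ℕ} (η : Cfg d M) (w : Fin d → ℤ) : Fin 2 :=
  if h : redVec d M w = 0 then 1
  else η ⟨redVec d M w, Finset.mem_erase.mpr ⟨h, redVec_mem_box d M w⟩⟩

/-- The swapped configuration `η^{y,z}`. -/
def swap {d M : ℕ} (η : Cfg d M) (y z : Fin d → ℤ) : Cfg d M := fun s =>
  if s.val = redVec d M y then extCfg η z
  else if s.val = redVec d M z then extCfg η y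
  else η s

/-- The shifted configuration `η^{0,w}` (tagged-particle jump in direction `w`). -/
def shift {d M : ℕ} (η : Cfg d M) (w : Fin d → ℤ) : Cfg d M := fun s =>
  if s.val = -w then 0 else extCfg η (s.val + w)

/-- Number of occupied sites of a configuration. -/
def nPart {d M : ℕ} (η : Cfg d M) : ℕ := ∑ s, (η s : ℕ)

/-- `C_{M,ℓ}`: configurations with exactly `ℓ` occupied sites. -/
def CSet (d M : ℕ) (ℓ : ℕ) : Finset (Cfg d M) :=
  Finset.univ.filter fun η => nPart η = ℓ

/-- ℓ¹ norm on `ℤ^d`. -/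
def oneNorm (d : ℕ) (v : Fin d → ℤ) : ℤ := ∑ i, |v i|

/-- Dot product `u · v`. -/
def dotR (d : ℕ) (u : Fin d → ℝ) (v : Fin d → ℤ) : ℝ := ∑ i, u i * (v i : ℝ)

/-- The summand (over `η`) of the functional `A_M^u`. -/
def bracket {d M K : ℕ} (u : Fin d → ℝ) (v : Fin K → Fin d → ℤ) (p : Fin K → ℝ)
    (Ψ : Cfg d M → ℝ) (η : Cfg d M) : ℝ :=
  ∑ k, p k *
    ((1 - ((extCfg η (v k) : ℕ) : ℝ)) *
        (dotR d u (v k) + Ψ (shift η (v k)) - Ψ η) ^ 2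
      + (1 / 2) * ∑ y ∈ (SM d M).filter (fun y => y + v k ≠ 0),
          (Ψ (swap η (y + v k) y) - Ψ η) ^ 2)

/-- The functional `A_M^u`. -/
def AM {d M K : ℕ} (u : Fin d → ℝ) (v : Fin K → Fin d → ℤ) (p : Fin K → ℝ)
    (Ψ : Cfg d M → ℝ) : ℝ :=
  ∑ η : Cfg d M, bracket u v p Ψ η

/-- The functional `A_{M,ℓ}^u`. -/
def AMl {d M K : ℕ} (u : Fin d → ℝ) (v : Fin K → Fin d → ℤ) (p : Fin K → ℝ)
    (ℓ : ℕ) (Ψ : Cfg d M → ℝ) : ℝ :=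
  (1 / ((CSet d M ℓ).card : ℝ)) * ∑ η ∈ CSet d M ℓ, bracket u v p Ψ η

/-- `Ψ ∈ H_M^r`: `Ψ` is a sum of `r` pure tensor product (rank-1) functions. -/
def IsRankLE {d M : ℕ} (r : ℕ) (Ψ : Cfg d M → ℝ) : Prop :=
  ∃ R : Fin r → Site d M → Fin 2 → ℝ, ∀ η, Ψ η = ∑ k, ∏ s, R k s (η s)

section Aux

variable {d M : ℕ}

lemma redInt_modeq (M : ℕ) (x : ℤ) : redInt M x ≡ x [ZMOD (2*(M:ℤ)+1)] := by
  have h : (x + M) % (2*(M:ℤ)+1) ≡ x + M [ZMOD (2*(M:ℤ)+1)] :=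
    Int.emod_emod_of_dvd _ dvd_rfl
  simpa [redInt, add_sub_cancel_right] using h.sub_right (M:ℤ)

lemma redInt_congr {x y : ℤ} (h : x ≡ y [ZMOD (2*(M:ℤ)+1)]) :
    redInt M x = redInt M y := by
  unfold redInt
  have := h.add_right (M:ℤ)
  rw [Int.ModEq] at this
  rw [this]

lemma redInt_add_redInt (x y : ℤ) :
    redInt M (redInt M x + y) = redInt M (x + y) :=
  redInt_congr ((redInt_modeq M x).add_right y)

lemma redInt_eq_self {x : ℤ} (h1 : -(M:ℤ) ≤ x) (h2 : x ≤ M) : redInt M x = x := by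
  unfold redInt
  have : (x + M) % (2*(M:ℤ)+1) = x + M := Int.emod_eq_of_lt (by omega) (by omega)
  omega

lemma redInt_eq_zero {x : ℤ} (h : |x| ≤ 2*(M:ℤ)) (h0 : redInt M x = 0) : x = 0 := by
  have hm := redInt_modeq M x
  rw [h0, Int.ModEq] at hm
  have hd : (2*(M:ℤ)+1) ∣ x := (Int.modEq_zero_iff_dvd).mp hm.symm
  exact Int.eq_zero_of_abs_lt_dvd hd (by omega)

lemma mem_box_iff {s : Fin d → ℤ} : s ∈ box d M ↔ ∀ i, -(M:ℤ) ≤ s i ∧ s i ≤ M := by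
  simp [box, Fintype.mem_piFinset, Finset.mem_Icc]

lemma zero_mem_box : (0 : Fin d → ℤ) ∈ box d M := by
  rw [mem_box_iff]; intro i; simp

lemma redVec_eq_self {s : Fin d → ℤ} (h : s ∈ box d M) : redVec d M s = s := by
  rw [mem_box_iff] at h
  funext i
  exact redInt_eq_self (h i).1 (h i).2

lemma redVec_add_redVec (s w : Fin d → ℤ) :
    redVec d M (redVec d M s + w) = redVec d M (s + w) := by
  funext i
  exact redInt_add_redInt (s i) (w i)

lemma redVec_ne_zero {s : Fin d → ℤ} (h : ∀ i, |s i| ≤ 2*(M:ℤ)) (h0 : s ≠ 0) :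
    redVec d M s ≠ 0 := by
  intro hc
  apply h0
  funext i
  exact redInt_eq_zero (h i) (congrFun hc i)

lemma redVec_add_eq_zero_iff {s w : Fin d → ℤ} (hs : s ∈ box d M)
    (hw' : -w ∈ box d M) : redVec d M (s + w) = 0 ↔ s = -w := by
  constructor
  · intro hc
    have h1 : redVec d M (redVec d M (s + w) + -w) = redVec d M (s + w + -w) :=
      redVec_add_redVec _ _
    rw [hc] at h1
    rw [zero_add, add_neg_cancel_right, redVec_eq_self hw', redVec_eq_self hs] at h1
    exact h1.symm
  · rintro rfl
    rw [neg_add_cancel, redVec_eq_self zero_mem_box]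

/-- The map realizing the shift by `w` on sites. -/
def shiftFun (w : Fin d → ℤ) (hw : w ∈ SM d M) : Site d M → Site d M := fun s =>
  if h : redVec d M (s.val + w) = 0 then ⟨w, hw⟩
  else ⟨redVec d M (s.val + w), Finset.mem_erase.mpr ⟨h, redVec_mem_box d M _⟩⟩

lemma shiftFun_inv (w w' : Fin d → ℤ) (hww' : w' = -w) (hw : w ∈ SM d M)
    (hw' : w' ∈ SM d M) (s : Site d M) : shiftFun w' hw' (shiftFun w hw s) = s := by
  subst hww'
  have hwb : w ∈ box d M := Finset.mem_of_mem_erase hw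
  have hwb' : -w ∈ box d M := Finset.mem_of_mem_erase hw'
  have hsb : s.val ∈ box d M := Finset.mem_of_mem_erase s.2
  have hs0 : s.val ≠ 0 := (Finset.mem_erase.mp s.2).1
  unfold shiftFun
  by_cases h : redVec d M (s.val + w) = 0
  · rw [dif_pos h]
    have hsw : s.val = -w := (redVec_add_eq_zero_iff hsb hwb').mp h
    have h2 : redVec d M (w + -w) = 0 := by
      rw [add_neg_cancel, redVec_eq_self zero_mem_box]
    simp only [dif_pos h2]
    exact Subtype.ext hsw.symm
  · rw [dif_neg h]
    have key : redVec d M (redVec d M (s.val + w) + -w) = s.val := by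
      rw [redVec_add_redVec, add_neg_cancel_right, redVec_eq_self hsb]
    have h2 : ¬ redVec d M (redVec d M (s.val + w) + -w) = 0 := by
      rw [key]; exact hs0
    simp only [dif_neg h2]
    exact Subtype.ext key

/-- The site equivalence realizing the shift by `w`. -/
def shiftEquiv (w : Fin d → ℤ) (hw : w ∈ SM d M) (hw' : -w ∈ SM d M) :
    Site d M ≃ Site d M where
  toFun := shiftFun w hw
  invFun := shiftFun (-w) hw'
  left_inv := shiftFun_inv w (-w) rfl hw hw'
  right_inv := shiftFun_inv (-w) w (neg_neg w).symm hw' hw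

lemma shift_eq_comp {w : Fin d → ℤ} (hw : w ∈ SM d M) (hw' : -w ∈ SM d M)
    (η : Cfg d M) (h0 : η ⟨w, hw⟩ = 0) :
    shift η w = η ∘ (shiftEquiv w hw hw') := by
  funext s
  have hsb : s.val ∈ box d M := Finset.mem_of_mem_erase s.2
  have hwb' : -w ∈ box d M := Finset.mem_of_mem_erase hw'
  show shift η w s = η (shiftFun w hw s)
  rw [shift, shiftFun]
  by_cases h : s.val = -w
  · rw [if_pos h, dif_pos ((redVec_add_eq_zero_iff hsb hwb').mpr h), h0]
  · have hrz : redVec d M (s.val + w) ≠ 0 := fun hc =>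
      h ((redVec_add_eq_zero_iff hsb hwb').mp hc)
    rw [if_neg h, dif_neg hrz, extCfg, dif_neg hrz]

lemma nPart_comp_equiv (η : Cfg d M) (σ : Site d M ≃ Site d M) :
    nPart (η ∘ σ) = nPart η :=
  Equiv.sum_comp σ (fun s => ((η s : ℕ)))

lemma nPart_shift {w : Fin d → ℤ} (hw : w ∈ SM d M) (hw' : -w ∈ SM d M)
    (η : Cfg d M) (h0 : η ⟨w, hw⟩ = 0) : nPart (shift η w) = nPart η := by
  rw [shift_eq_comp hw hw' η h0]
  exact nPart_comp_equiv η _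

lemma swap_eq_comp (η : Cfg d M) {y z : Fin d → ℤ} (hy : redVec d M y ≠ 0)
    (hz : redVec d M z ≠ 0) :
    swap η y z = η ∘ (Equiv.swap (⟨redVec d M y, Finset.mem_erase.mpr ⟨hy, redVec_mem_box d M y⟩⟩ : Site d M)
      ⟨redVec d M z, Finset.mem_erase.mpr ⟨hz, redVec_mem_box d M z⟩⟩) := by
  set a : Site d M := ⟨redVec d M y, Finset.mem_erase.mpr ⟨hy, redVec_mem_box d M y⟩⟩ with ha
  set b : Site d M := ⟨redVec d M z, Finset.mem_erase.mpr ⟨hz, redVec_mem_box d M z⟩⟩ with hb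
  funext s
  show swap η y z s = η (Equiv.swap a b s)
  rw [swap]
  by_cases h1 : s.val = redVec d M y
  · have hsa : s = a := Subtype.ext h1
    rw [if_pos h1, hsa, Equiv.swap_apply_left, extCfg, dif_neg hz]
  · rw [if_neg h1]
    by_cases h2 : s.val = redVec d M z
    · have hsb : s = b := Subtype.ext h2
      rw [if_pos h2, hsb, Equiv.swap_apply_right, extCfg, dif_neg hy]
    · rw [if_neg h2, Equiv.swap_apply_of_ne_of_ne
        (fun hc => h1 (congrArg Subtype.val hc)) (fun hc => h2 (congrArg Subtype.val hc))]

lemma nPart_swap (η : Cfg d M) {y z : Fin d → ℤ} (hy : redVec d M y ≠ 0)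
    (hz : redVec d M z ≠ 0) : nPart (swap η y z) = nPart η := by
  rw [swap_eq_comp η hy hz]
  exact nPart_comp_equiv η _

end Aux
section Aux2

variable {d M : ℕ}

lemma bracket_congr {K : ℕ} (u : Fin d → ℝ) (v : Fin K → Fin d → ℤ) (p : Fin K → ℝ)
    (hv0 : ∀ k, v k ≠ 0) (hv1 : ∀ k, oneNorm d (v k) ≤ (M : ℤ))
    (Ψ₁ Ψ₂ : Cfg d M → ℝ) (η : Cfg d M)
    (h : ∀ ζ, nPart ζ = nPart η → Ψ₁ ζ = Ψ₂ ζ) :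
    bracket u v p Ψ₁ η = bracket u v p Ψ₂ η := by
  have hη12 : Ψ₁ η = Ψ₂ η := h _ rfl
  unfold bracket
  apply Finset.sum_congr rfl
  intro k _
  have habs : ∀ i, |v k i| ≤ (M : ℤ) := by
    intro i
    calc |v k i| ≤ ∑ j, |v k j| :=
          Finset.single_le_sum (f := fun j => |v k j|) (fun j _ => abs_nonneg _)
            (Finset.mem_univ i)
      _ ≤ M := hv1 k
  have hvbox : v k ∈ box d M := mem_box_iff.mpr (fun i => abs_le.mp (habs i))
  have hvSM : v k ∈ SM d M := Finset.mem_erase.mpr ⟨hv0 k, hvbox⟩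
  have hnvSM : -(v k) ∈ SM d M := by
    refine Finset.mem_erase.mpr ⟨neg_ne_zero.mpr (hv0 k), mem_box_iff.mpr fun i => ?_⟩
    have := abs_le.mp (habs i)
    simp only [Pi.neg_apply]
    omega
  have hB : ∑ y ∈ (SM d M).filter (fun y => y + v k ≠ 0),
        (Ψ₁ (swap η (y + v k) y) - Ψ₁ η) ^ 2
      = ∑ y ∈ (SM d M).filter (fun y => y + v k ≠ 0),
        (Ψ₂ (swap η (y + v k) y) - Ψ₂ η) ^ 2 := by
    apply Finset.sum_congr rfl
    intro y hy
    rw [Finset.mem_filter] at hy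
    have hyb : y ∈ box d M := Finset.mem_of_mem_erase hy.1
    have hy0 : y ≠ 0 := (Finset.mem_erase.mp hy.1).1
    have hry : redVec d M y ≠ 0 := by rw [redVec_eq_self hyb]; exact hy0
    have hryv : redVec d M (y + v k) ≠ 0 := by
      refine redVec_ne_zero (fun i => ?_) hy.2
      have h1 := (mem_box_iff.mp hyb) i
      have h2 := abs_le.mp (habs i)
      rw [abs_le]
      simp only [Pi.add_apply]
      omega
    rw [h _ (nPart_swap η hryv hry), hη12]
  have hA : (1 - ((extCfg η (v k) : ℕ) : ℝ)) *
        (dotR d u (v k) + Ψ₁ (shift η (v k)) - Ψ₁ η) ^ 2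
      = (1 - ((extCfg η (v k) : ℕ) : ℝ)) *
        (dotR d u (v k) + Ψ₂ (shift η (v k)) - Ψ₂ η) ^ 2 := by
    have hlt : (extCfg η (v k) : ℕ) < 2 := (extCfg η (v k)).isLt
    have hcases : (extCfg η (v k) : ℕ) = 0 ∨ (extCfg η (v k) : ℕ) = 1 := by omega
    rcases hcases with he0 | he1
    · have hred : redVec d M (v k) = v k := redVec_eq_self hvbox
      have hne : redVec d M (v k) ≠ 0 := by rw [hred]; exact hv0 k
      have hext : extCfg η (v k) = η ⟨v k, hvSM⟩ := by
        rw [extCfg, dif_neg hne]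
        exact congrArg η (Subtype.ext hred)
      have hη0 : η ⟨v k, hvSM⟩ = 0 := by
        rw [← hext]
        exact Fin.ext he0
      rw [h _ (nPart_shift hvSM hnvSM η hη0), hη12]
    · rw [he1]
      norm_num
  rw [hA, hB]

end Aux2
/-- if `Ψ_opt` minimizes `A_M^u` over `H_M`, then for every `0 ≤ ℓ ≤ N` the
value `A_{M,ℓ}^u(Ψ_opt)` is the minimum of `A_{M,ℓ}^u` over `H_M`. -/
theorem statement4 (d M K : ℕ) (hd : 1 ≤ d) (hM : 1 ≤ M) (hK : 1 ≤ K)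
    (u : Fin d → ℝ) (v : Fin K → Fin d → ℤ) (p : Fin K → ℝ)
    (hv0 : ∀ k, v k ≠ 0) (hv1 : ∀ k, oneNorm d (v k) ≤ (M : ℤ))
    (hp : ∀ k, 0 < p k ∧ p k ≤ 1)
    (Ψopt : Cfg d M → ℝ) (hopt : ∀ Ψ : Cfg d M → ℝ, AM u v p Ψopt ≤ AM u v p Ψ) :
    ∀ ℓ : ℕ, ℓ ≤ (2 * M + 1) ^ d - 1 →
      IsLeast (Set.range (AMl u v p ℓ : (Cfg d M → ℝ) → ℝ)) (AMl u v p ℓ Ψopt) := by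
  intro ℓ _
  constructor
  · exact ⟨Ψopt, rfl⟩
  · rintro x ⟨Ψ, rfl⟩
    set Ψ' : Cfg d M → ℝ := fun η => if nPart η = ℓ then Ψ η else Ψopt η with hΨ'
    have hbr : ∀ η : Cfg d M, bracket u v p Ψ' η =
        if nPart η = ℓ then bracket u v p Ψ η else bracket u v p Ψopt η := by
      intro η
      split_ifs with hη
      · exact bracket_congr u v p hv0 hv1 _ _ η
          (fun ζ hζ => by simp only [hΨ']; rw [hζ, if_pos hη])
      · exact bracket_congr u v p hv0 hv1 _ _ η
          (fun ζ hζ => by simp only [hΨ']; rw [hζ, if_neg hη])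
    have hsplit : ∀ Φ : Cfg d M → ℝ, AM u v p Φ =
        (∑ η ∈ CSet d M ℓ, bracket u v p Φ η) +
        ∑ η ∈ Finset.univ.filter (fun η : Cfg d M => ¬ nPart η = ℓ), bracket u v p Φ η := by
      intro Φ
      rw [AM, CSet]
      exact (Finset.sum_filter_add_sum_filter_not _ _ _).symm
    have h1 : ∀ η ∈ CSet d M ℓ, bracket u v p Ψ' η = bracket u v p Ψ η := by
      intro η hη
      rw [hbr η, if_pos (by simpa [CSet] using hη)]
    have h2 : ∀ η ∈ Finset.univ.filter (fun η : Cfg d M => ¬ nPart η = ℓ),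
        bracket u v p Ψ' η = bracket u v p Ψopt η := by
      intro η hη
      rw [hbr η, if_neg (by simpa using (Finset.mem_filter.mp hη).2)]
    have hsum : (∑ η ∈ CSet d M ℓ, bracket u v p Ψopt η) ≤
        ∑ η ∈ CSet d M ℓ, bracket u v p Ψ η := by
      have e1 := hsplit Ψopt
      have e2 := hsplit Ψ'
      rw [Finset.sum_congr rfl h1, Finset.sum_congr rfl h2] at e2
      have := hopt Ψ'
      linarith
    rw [AMl, AMl]
    exact mul_le_mul_of_nonneg_left hsum (one_div_nonneg.mpr (Nat.cast_nonneg _))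

end SelfDiffusion
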